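/- arXiv:1704.00191 — 6 statements merged into one kernel-verified Lean document; each statement's English description precedes it below -/
import Mathlib

section
/- If M_R is an (σ,δ)-skew Armendariz module, then M_R is (σ,δ)-skew McCoy. -/
open MulOpposite

/-- `fw σ δ i j` is `f_i^j`, the sum of all words in `σ`, `δ` built with `i` factors of `σ`
and `j - i` factors of `δ`. -/
def fw {R : Type*} [Ring R] (σ δ : R → R) : ℕ → ℕ → R → R
  | 0, 0 => id
  | _ + 1, 0 => fun _ => 0
  | 0, j + 1 => fun a => δ (fw σ δ 0 j a)
  | i + 1, j + 1 => fun a => σ (fw σ δ i j a) + δ (fw σ δ (i + 1) j a)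

/-- Multiplication of the Ore extension `R[x;σ,δ]`, on coefficient sequences. -/
noncomputable def skewMul {R : Type*} [Ring R] (σ δ : R → R) (p q : ℕ →₀ R) : ℕ →₀ R :=
  p.sum fun j a => q.sum fun l b =>
    ∑ i ∈ Finset.range (j + 1), Finsupp.single (i + l) (a * fw σ δ i j b)

/-- The action of `R[x;σ,δ]` on the skew polynomial module `M[x;σ,δ]`, where `M` is a
right `R`-module (a module over `Rᵐᵒᵖ`): `(m x^j)·(b x^l) = Σ_{i≤j} (m·f_i^j(b)) x^{i+l}`. -/
noncomputable def skewSMul {R : Type*} [Ring R] (σ δ : R → R) {M : Type*} [AddCommGroup M]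
    [Module Rᵐᵒᵖ M] (m : ℕ →₀ M) (q : ℕ →₀ R) : ℕ →₀ M :=
  m.sum fun j mm => q.sum fun l b =>
    ∑ i ∈ Finset.range (j + 1), Finsupp.single (i + l) (op (fw σ δ i j b) • mm)

/-- A right `R`-module `M` is `(σ,δ)`-skew McCoy if whenever `m(x) g(x) = 0` in `M[x;σ,δ]`
with `g(x) ≠ 0`, there is a nonzero `a ∈ R` with `m(x) a = 0`. -/
def IsSkewMcCoy {R : Type*} [Ring R] (σ δ : R → R) (M : Type*) [AddCommGroup M]
    [Module Rᵐᵒᵖ M] : Prop :=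
  ∀ (m : ℕ →₀ M) (g : ℕ →₀ R), g ≠ 0 → skewSMul σ δ m g = 0 →
    ∃ a : R, a ≠ 0 ∧ skewSMul σ δ m (Finsupp.single 0 a) = 0

/-- A right `R`-module `M` is `(σ,δ)`-skew Armendariz if `m(x) g(x) = 0` implies
`(m_i x^i)(b_j x^j) = 0` for all `i, j`. -/
def IsSkewArmendariz {R : Type*} [Ring R] (σ δ : R → R) (M : Type*) [AddCommGroup M]
    [Module Rᵐᵒᵖ M] : Prop :=
  ∀ (m : ℕ →₀ M) (g : ℕ →₀ R), skewSMul σ δ m g = 0 →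
    ∀ i j, skewSMul σ δ (Finsupp.single i (m i)) (Finsupp.single j (g j)) = 0

/-- `σ`-compatibility of a right module: `m a = 0 ↔ m σ(a) = 0`. -/
def SigmaCompatible {R : Type*} [Ring R] (σ : R → R) (M : Type*) [AddCommGroup M]
    [Module Rᵐᵒᵖ M] : Prop :=
  ∀ (m : M) (a : R), op a • m = 0 ↔ op (σ a) • m = 0

/-- `δ`-compatibility of a right module: `m a = 0 → m δ(a) = 0`. -/
def DeltaCompatible {R : Type*} [Ring R] (δ : R → R) (M : Type*) [AddCommGroup M]
    [Module Rᵐᵒᵖ M] : Prop :=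
  ∀ (m : M) (a : R), op a • m = 0 → op (δ a) • m = 0

/-- A right module `M` is reduced if `m a = 0` implies `mR ∩ Ma = 0`. -/
def IsReducedModule {R : Type*} [Ring R] (M : Type*) [AddCommGroup M]
    [Module Rᵐᵒᵖ M] : Prop :=
  ∀ (m : M) (a : R), op a • m = 0 →
    ∀ x : M, (∃ r : R, op r • m = x) → (∃ m' : M, op a • m' = x) → x = 0

/-- Condition `(*)`: `m(x) f(x) = 0` implies `m(x) R f(x) = 0`. -/
def StarCondition {R : Type*} [Ring R] (σ δ : R → R) (M : Type*) [AddCommGroup M]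
    [Module Rᵐᵒᵖ M] : Prop :=
  ∀ (m : ℕ →₀ M) (f : ℕ →₀ R), skewSMul σ δ m f = 0 →
    ∀ r : R, skewSMul σ δ m (skewMul σ δ (Finsupp.single 0 r) f) = 0

section SkewPolynomialModule

variable {R : Type*} [Ring R] {σ δ : R → R} {M : Type*} [AddCommGroup M] [Module Rᵐᵒᵖ M]

theorem skewSMul_single_right (m : ℕ →₀ M) {l : ℕ} {b : R} (hb : b ≠ 0) :
    skewSMul σ δ m (Finsupp.single l b) = m.sum fun k mk =>
      ∑ i ∈ Finset.range (k + 1), Finsupp.single (i + l) (op (fw σ δ i k b) • mk) := by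
  simp only [skewSMul, Finsupp.sum, Finsupp.support_single l hb, Finset.sum_singleton,
    Finsupp.single_eq_same]

theorem smul_fw_eq_zero_of_skewSMul_single_eq_zero {k l i : ℕ} {mk : M} {b : R} (hb : b ≠ 0)
    (h : skewSMul σ δ (Finsupp.single k mk) (Finsupp.single l b) = 0) (hi : i ≤ k) :
    op (fw σ δ i k b) • mk = 0 := by
  rw [skewSMul_single_right _ hb, Finsupp.sum_single_index (by simp)] at h
  have hcoeff := DFunLike.congr_fun h (i + l)
  rw [Finsupp.finsetSum_apply] at hcoeff
  simpa [Finsupp.single_apply, Nat.lt_succ_iff.mpr hi] using hcoeff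

/-- The witness is any nonzero coefficient `b_j` of `g`: the Armendariz property kills every
`m_k f_i^k(b_j)`, and these are exactly the coefficients of `m(x) b_j`. -/
theorem IsSkewArmendariz.isSkewMcCoy (hM : IsSkewArmendariz σ δ M) : IsSkewMcCoy σ δ M := by
  intro m g hg hmg
  obtain ⟨j, hj⟩ : ∃ j, g j ≠ 0 := by
    by_contra! h
    exact hg (Finsupp.ext h)
  refine ⟨g j, hj, ?_⟩
  rw [skewSMul_single_right m hj]
  refine Finset.sum_eq_zero fun k _ => Finset.sum_eq_zero fun i hi => ?_
  rw [smul_fw_eq_zero_of_skewSMul_single_eq_zero hj (hM m g hmg k j)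
    (Nat.lt_succ_iff.mp (Finset.mem_range.mp hi)), Finsupp.single_zero]

end SkewPolynomialModule

theorem skewArmendariz_isSkewMcCoy_general {R : Type*} [Ring R] (σ : R →+* R) (δ : R → R)
    (M : Type*) [AddCommGroup M] [Module Rᵐᵒᵖ M]
    (hM : IsSkewArmendariz ⇑σ δ M) : IsSkewMcCoy ⇑σ δ M :=
  hM.isSkewMcCoy

/-- If `M_R` is an `(σ,δ)`-skew Armendariz module then it is `(σ,δ)`-skew McCoy. -/
theorem skewArmendariz_isSkewMcCoy {R : Type*} [Ring R] (σ : R →+* R) (δ : R → R)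
    (hδadd : ∀ a b : R, δ (a + b) = δ a + δ b)
    (hδmul : ∀ a b : R, δ (a * b) = σ a * δ b + δ a * b)
    (M : Type*) [AddCommGroup M] [Module Rᵐᵒᵖ M]
    (hM : IsSkewArmendariz ⇑σ δ M) : IsSkewMcCoy ⇑σ δ M :=
  skewArmendariz_isSkewMcCoy_general σ δ M hM
end

section
/- If for each i in an index set I, M_i is an (σ_i,δ_i)-skew McCoy right R_i-module, then the product module ∏_{i∈I} M_i is (σ,δ)-skew McCoy as a right ∏_{i∈I} R_i-module, where σ = (σ_i)_{i∈I} and δ = (δ_i)_{i∈I} act componentwise. -/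
/-! Products in `(∏ M_i)[x;σ,δ]` are computed componentwise, since `f_i^j` of the
componentwise maps is componentwise and vanishes at `0` once each `δ_i` does (which
additivity gives). So if `m g = 0` with `g_n ≠ 0`, pick `k` with `(g_n)_k ≠ 0`: the `k`-th
components satisfy `m_k g_k = 0` with `g_k ≠ 0`, the McCoy property of `M_k` yields
`a ≠ 0` with `m_k a = 0`, and `Pi.single k a` annihilates `m`. -/

open MulOpposite

/-- The opposite of a product ring maps to the product of opposites. -/
def piOpRingHom {ι : Type*} (Rf : ι → Type*) [∀ i, Ring (Rf i)] :
    (∀ i, Rf i)ᵐᵒᵖ →+* ∀ i, (Rf i)ᵐᵒᵖ where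
  toFun a i := op (a.unop i)
  map_one' := rfl
  map_mul' _ _ := rfl
  map_zero' := rfl
  map_add' _ _ := rfl

/-- The componentwise right-module structure of `∏ M_i` over `∏ R_i`. -/
noncomputable instance piOpModule {ι : Type*} (Rf : ι → Type*) [∀ i, Ring (Rf i)]
    (Mf : ι → Type*) [∀ i, AddCommGroup (Mf i)] [∀ i, Module (Rf i)ᵐᵒᵖ (Mf i)] :
    Module (∀ i, Rf i)ᵐᵒᵖ (∀ i, Mf i) :=
  Module.compHom _ (piOpRingHom Rf)

theorem fw_zero {R : Type*} [Ring R] {σ δ : R → R} (hσ : σ 0 = 0) (hδ : δ 0 = 0) :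
    ∀ i j : ℕ, fw σ δ i j 0 = 0
  | 0, 0 => rfl
  | _ + 1, 0 => rfl
  | 0, j + 1 => by simp only [fw, fw_zero hσ hδ 0 j, hδ]
  | i + 1, j + 1 => by
    simp only [fw, fw_zero hσ hδ i j, fw_zero hσ hδ (i + 1) j, hσ, hδ, add_zero]

theorem skewSMul_zero_right {R : Type*} [Ring R] (σ δ : R → R) {M : Type*} [AddCommGroup M]
    [Module Rᵐᵒᵖ M] (m : ℕ →₀ M) : skewSMul σ δ m 0 = 0 := by
  simp [skewSMul]

section Pi

variable {ι : Type*} {Rf : ι → Type*} [∀ i, Ring (Rf i)]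
  {Mf : ι → Type*} [∀ i, AddCommGroup (Mf i)] [∀ i, Module (Rf i)ᵐᵒᵖ (Mf i)]
  (σ δ : ∀ i, Rf i → Rf i)

theorem fw_pi_apply (k : ι) :
    ∀ (i j : ℕ) (b : ∀ i, Rf i),
      fw (fun a i => σ i (a i)) (fun a i => δ i (a i)) i j b k = fw (σ k) (δ k) i j (b k)
  | 0, 0, _ => rfl
  | _ + 1, 0, _ => rfl
  | 0, j + 1, b => by simp only [fw, fw_pi_apply k 0 j b]
  | i + 1, j + 1, b => by
    simp only [fw, Pi.add_apply, fw_pi_apply k i j b, fw_pi_apply k (i + 1) j b]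

theorem pi_op_smul_apply (a : ∀ i, Rf i) (m : ∀ i, Mf i) (k : ι) :
    (op a • m) k = op (a k) • m k := rfl

theorem mapRange_skewSMul_pi (hσ : ∀ i, σ i 0 = 0) (hδ : ∀ i, δ i 0 = 0)
    (m : ℕ →₀ ∀ i, Mf i) (g : ℕ →₀ ∀ i, Rf i) (k : ι) :
    (skewSMul (fun a i => σ i (a i)) (fun a i => δ i (a i)) m g).mapRange (· k) rfl =
      skewSMul (σ k) (δ k) (m.mapRange (· k) rfl) (g.mapRange (· k) rfl) := by
  have hfw0 := fw_zero (hσ k) (hδ k)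
  change Finsupp.mapRange.addMonoidHom (Pi.evalAddMonoidHom Mf k) _ = _
  rw [skewSMul, skewSMul, Finsupp.sum_mapRange_index (by simp), map_finsuppSum]
  refine Finsupp.sum_congr fun j _ => ?_
  rw [Finsupp.sum_mapRange_index (by simp [hfw0]), map_finsuppSum]
  refine Finsupp.sum_congr fun l _ => ?_
  simp only [map_sum, Finsupp.mapRange.addMonoidHom_apply, Finsupp.mapRange_single,
    Pi.evalAddMonoidHom_apply, pi_op_smul_apply, fw_pi_apply]

theorem skewSMul_pi_eq_zero_iff (hσ : ∀ i, σ i 0 = 0) (hδ : ∀ i, δ i 0 = 0)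
    (m : ℕ →₀ ∀ i, Mf i) (g : ℕ →₀ ∀ i, Rf i) :
    skewSMul (fun a i => σ i (a i)) (fun a i => δ i (a i)) m g = 0 ↔
      ∀ k, skewSMul (σ k) (δ k) (m.mapRange (· k) rfl) (g.mapRange (· k) rfl) = 0 := by
  simp only [← mapRange_skewSMul_pi σ δ hσ hδ, Finsupp.ext_iff, Finsupp.mapRange_apply,
    Finsupp.coe_zero, Pi.zero_apply, funext_iff]
  exact forall_comm

end Pi

theorem pi_isSkewMcCoy_general {ι : Type*} (Rf : ι → Type*) [∀ i, Ring (Rf i)]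
    (Mf : ι → Type*) [∀ i, AddCommGroup (Mf i)] [∀ i, Module (Rf i)ᵐᵒᵖ (Mf i)]
    (σ : ∀ i, Rf i →+* Rf i) (δ : ∀ i, Rf i → Rf i)
    (hδadd : ∀ i, ∀ a b : Rf i, δ i (a + b) = δ i a + δ i b)
    (hMc : ∀ i, IsSkewMcCoy ⇑(σ i) (δ i) (Mf i)) :
    IsSkewMcCoy (R := ∀ i, Rf i) (fun a i => σ i (a i)) (fun a i => δ i (a i))
      (∀ i, Mf i) := by
  classical
  intro m g hg hmg
  have hσ0 (i : ι) : σ i 0 = 0 := map_zero (σ i)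
  have hδ0 (i : ι) : δ i 0 = 0 := by simpa using hδadd i 0 0
  rw [skewSMul_pi_eq_zero_iff _ _ hσ0 hδ0] at hmg
  obtain ⟨n, k, hnk⟩ : ∃ n k, g n k ≠ 0 := by
    by_contra! h
    exact hg (Finsupp.ext fun n => funext (h n))
  obtain ⟨a, ha, hma⟩ := hMc k _ _ (Finsupp.ne_iff.mpr ⟨n, hnk⟩) (hmg k)
  refine ⟨Pi.single k a, by simpa using ha, ?_⟩
  rw [skewSMul_pi_eq_zero_iff _ _ hσ0 hδ0]
  intro k'
  rcases eq_or_ne k' k with rfl | hk'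
  · simpa using hma
  · simp [hk', skewSMul_zero_right]

/-- If each `M_i` is an `(σ_i,δ_i)`-skew McCoy right `R_i`-module, then `∏ M_i` is an
`(σ,δ)`-skew McCoy right `∏ R_i`-module, where `σ`, `δ` act componentwise. -/
theorem pi_isSkewMcCoy {ι : Type*} (Rf : ι → Type*) [∀ i, Ring (Rf i)]
    (Mf : ι → Type*) [∀ i, AddCommGroup (Mf i)] [∀ i, Module (Rf i)ᵐᵒᵖ (Mf i)]
    (σ : ∀ i, Rf i →+* Rf i) (δ : ∀ i, Rf i → Rf i)
    (hδadd : ∀ i, ∀ a b : Rf i, δ i (a + b) = δ i a + δ i b)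
    (hδmul : ∀ i, ∀ a b : Rf i, δ i (a * b) = σ i a * δ i b + δ i a * b)
    (hMc : ∀ i, IsSkewMcCoy ⇑(σ i) (δ i) (Mf i)) :
    IsSkewMcCoy (R := ∀ i, Rf i) (fun a i => σ i (a i)) (fun a i => δ i (a i))
      (∀ i, Mf i) :=
  pi_isSkewMcCoy_general Rf Mf σ δ hδadd hMc
end

section
/- If M_R is an (σ,δ)-compatible module, then for any m ∈ M, a ∈ R and nonnegative integers i ≤ j, ma = 0 implies m·f_i^j(a) = 0, where f_i^j is the sum of all words in σ and δ with i factors of σ and j−i factors of δ. -/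
open MulOpposite

theorem fw_smul_eq_zero_of_smul_eq_zero {R : Type*} [Ring R] {σ δ : R → R} {M : Type*}
    [AddCommGroup M] [Module Rᵐᵒᵖ M] (hσ : ∀ (m : M) (a : R), op a • m = 0 → op (σ a) • m = 0)
    (hδ : DeltaCompatible δ M) {m : M} {a : R} (ha : op a • m = 0) :
    ∀ i j : ℕ, op (fw σ δ i j a) • m = 0
  | 0, 0 => ha
  | _ + 1, 0 => by simp only [fw, op_zero, zero_smul]
  | 0, j + 1 => hδ m _ (fw_smul_eq_zero_of_smul_eq_zero hσ hδ ha 0 j)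
  | i + 1, j + 1 => by
    simp only [fw, op_add, add_smul]
    rw [hσ m _ (fw_smul_eq_zero_of_smul_eq_zero hσ hδ ha i j),
      hδ m _ (fw_smul_eq_zero_of_smul_eq_zero hσ hδ ha (i + 1) j), add_zero]

theorem compatible_fw_general {R : Type*} [Ring R] (σ : R →+* R) (δ : R → R)
    (M : Type*) [AddCommGroup M] [Module Rᵐᵒᵖ M]
    (hσ : SigmaCompatible ⇑σ M) (hδc : DeltaCompatible δ M) :
    ∀ (m : M) (a : R), op a • m = 0 → ∀ i j : ℕ, i ≤ j →
      op (fw ⇑σ δ i j a) • m = 0 :=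
  fun _ _ ha i j _ => fw_smul_eq_zero_of_smul_eq_zero (fun m a => (hσ m a).mp) hδc ha i j

/-- For an `(σ,δ)`-compatible module, `m a = 0` implies `m f_i^j(a) = 0` for all `i ≤ j`. -/
theorem compatible_fw {R : Type*} [Ring R] (σ : R →+* R) (δ : R → R)
    (hδadd : ∀ a b : R, δ (a + b) = δ a + δ b)
    (hδmul : ∀ a b : R, δ (a * b) = σ a * δ b + δ a * b)
    (M : Type*) [AddCommGroup M] [Module Rᵐᵒᵖ M]
    (hσ : SigmaCompatible ⇑σ M) (hδc : DeltaCompatible δ M) :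
    ∀ (m : M) (a : R), op a • m = 0 → ∀ i j : ℕ, i ≤ j →
      op (fw ⇑σ δ i j a) • m = 0 :=
  compatible_fw_general σ δ M hσ hδc
end

section
/- Let M_R be a module and (σ,δ) a quasi-derivation of R. The following are equivalent: (1) for any subset U of M[x;σ,δ], (r_{R[x;σ,δ]}(U) ∩ R)[x;σ,δ] = r_{R[x;σ,δ]}(U); (2) for any m(x) = Σ_{i=0}^p m_i x^i ∈ M[x;σ,δ] and f(x) = Σ_{j=0}^q a_j x^j ∈ R[x;σ,δ], m(x)f(x) = 0 implies Σ_{ℓ=i}^p m_ℓ f_i^ℓ(a_j) = 0 for all i, j. -/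
open MulOpposite

/-! Since `σ 0 = 0` and `δ 0 = 0`, right multiplication by `a x^l` is right multiplication by
the constant `a` followed by the shift by `l`, so `m(x) f(x) = Σ_j (m(x) a_j) x^j`. Hence both
conditions say exactly that `m(x) f(x) = 0` forces `m(x) a_j = 0` for every `j`; and `m(x) a`
has `i`-th coefficient `Σ_{ℓ ≥ i} m_ℓ f_i^ℓ(a)`. -/

section SkewPolynomialModule

variable {R : Type*} [Ring R] {σ δ : R → R} {M : Type*} [AddCommGroup M] [Module Rᵐᵒᵖ M]

lemma fw_apply_zero (hσ : σ 0 = 0) (hδ : δ 0 = 0) (i j : ℕ) : fw σ δ i j (0 : R) = 0 := by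
  induction j generalizing i with
  | zero => cases i <;> simp [fw]
  | succ j ih => cases i <;> simp [fw, ih, hσ, hδ]

lemma skewSMul_single (hσ : σ 0 = 0) (hδ : δ 0 = 0) (m : ℕ →₀ M) (l : ℕ) (b : R) :
    skewSMul σ δ m (Finsupp.single l b) =
      m.sum fun j mm => ∑ i ∈ Finset.range (j + 1),
        Finsupp.single (i + l) (op (fw σ δ i j b) • mm) := by
  refine Finset.sum_congr rfl fun j _ => Finsupp.sum_single_index ?_
  simp [fw_apply_zero hσ hδ]

lemma skewSMul_eq_sum_single (hσ : σ 0 = 0) (hδ : δ 0 = 0) (m : ℕ →₀ M) (f : ℕ →₀ R) :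
    skewSMul σ δ m f = f.sum fun l b => skewSMul σ δ m (Finsupp.single l b) := by
  rw [skewSMul, Finsupp.sum_comm]
  exact Finset.sum_congr rfl fun l _ => (skewSMul_single hσ hδ m l (f l)).symm

lemma skewSMul_single_eq_mapDomain (hσ : σ 0 = 0) (hδ : δ 0 = 0) (m : ℕ →₀ M) (l : ℕ) (b : R) :
    skewSMul σ δ m (Finsupp.single l b) =
      Finsupp.mapDomain (· + l) (skewSMul σ δ m (Finsupp.single 0 b)) := by
  simp only [skewSMul_single hσ hδ, Finsupp.mapDomain_sum, Finsupp.mapDomain_finsetSum,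
    Finsupp.mapDomain_single, add_zero]

lemma skewSMul_eq_zero_of_forall_coeff (hσ : σ 0 = 0) (hδ : δ 0 = 0) (m : ℕ →₀ M) (f : ℕ →₀ R)
    (h : ∀ j, skewSMul σ δ m (Finsupp.single 0 (f j)) = 0) : skewSMul σ δ m f = 0 := by
  rw [skewSMul_eq_sum_single hσ hδ]
  refine Finset.sum_eq_zero fun l _ => ?_
  dsimp only
  rw [skewSMul_single_eq_mapDomain hσ hδ, h, Finsupp.mapDomain_zero]

lemma skewSMul_single_zero_apply (hσ : σ 0 = 0) (hδ : δ 0 = 0) (m : ℕ →₀ M) (a : R) (i : ℕ) :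
    skewSMul σ δ m (Finsupp.single 0 a) i =
      ∑ ℓ ∈ m.support.filter (fun ℓ => i ≤ ℓ), op (fw σ δ i ℓ a) • m ℓ := by
  rw [skewSMul_single hσ hδ, Finsupp.sum_apply, Finsupp.sum, Finset.sum_filter]
  refine Finset.sum_congr rfl fun ℓ _ => ?_
  simp only [add_zero, Finset.sum_apply', Finsupp.single_apply, Finset.sum_ite_eq',
    Finset.mem_range, Nat.lt_succ_iff]

lemma skewSMul_single_zero_eq_zero_iff (hσ : σ 0 = 0) (hδ : δ 0 = 0) (m : ℕ →₀ M) (a : R) :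
    skewSMul σ δ m (Finsupp.single 0 a) = 0 ↔
      ∀ i, ∑ ℓ ∈ m.support.filter (fun ℓ => i ≤ ℓ), op (fw σ δ i ℓ a) • m ℓ = 0 := by
  simp only [Finsupp.ext_iff, skewSMul_single_zero_apply hσ hδ, Finsupp.coe_zero, Pi.zero_apply]

end SkewPolynomialModule

theorem annihilator_closed_iff_general {R : Type*} [Ring R] (σ : R →+* R) (δ : R → R)
    (hδadd : ∀ a b : R, δ (a + b) = δ a + δ b)
    (M : Type*) [AddCommGroup M] [Module Rᵐᵒᵖ M] :
    (∀ U : Set (ℕ →₀ M),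
        {f : ℕ →₀ R | ∀ u ∈ U, skewSMul ⇑σ δ u f = 0} =
          {f : ℕ →₀ R | ∀ j : ℕ, ∀ u ∈ U, skewSMul ⇑σ δ u (Finsupp.single 0 (f j)) = 0}) ↔
      (∀ (m : ℕ →₀ M) (f : ℕ →₀ R), skewSMul ⇑σ δ m f = 0 → ∀ i j : ℕ,
        ∑ ℓ ∈ m.support.filter (fun ℓ => i ≤ ℓ), op (fw ⇑σ δ i ℓ (f j)) • m ℓ = 0) := by
  have hσ : σ 0 = 0 := map_zero σ
  have hδ : δ 0 = 0 := by simpa using hδadd 0 0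
  constructor
  · intro H m f hmf i j
    have hf : f ∈ {f : ℕ →₀ R | ∀ j : ℕ, ∀ u ∈ ({m} : Set (ℕ →₀ M)),
        skewSMul ⇑σ δ u (Finsupp.single 0 (f j)) = 0} := by
      rw [← H]
      simpa using hmf
    exact (skewSMul_single_zero_eq_zero_iff hσ hδ m (f j)).mp (hf j m rfl) i
  · intro H U
    ext f
    exact ⟨fun hf j u hu => (skewSMul_single_zero_eq_zero_iff hσ hδ u (f j)).mpr
        fun i => H u f (hf u hu) i j,
      fun hf u hu => skewSMul_eq_zero_of_forall_coeff hσ hδ u f fun j => hf j u hu⟩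

/-- The following are equivalent: (1) for any `U ⊆ M[x;σ,δ]`,
`(r_{R[x;σ,δ]}(U) ∩ R)[x;σ,δ] = r_{R[x;σ,δ]}(U)`; (2) whenever `m(x) f(x) = 0`,
`Σ_{ℓ≥i} m_ℓ f_i^ℓ(a_j) = 0` for all `i, j`. -/
theorem annihilator_closed_iff {R : Type*} [Ring R] (σ : R →+* R) (δ : R → R)
    (hδadd : ∀ a b : R, δ (a + b) = δ a + δ b)
    (hδmul : ∀ a b : R, δ (a * b) = σ a * δ b + δ a * b)
    (M : Type*) [AddCommGroup M] [Module Rᵐᵒᵖ M] :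
    (∀ U : Set (ℕ →₀ M),
        {f : ℕ →₀ R | ∀ u ∈ U, skewSMul ⇑σ δ u f = 0} =
          {f : ℕ →₀ R | ∀ j : ℕ, ∀ u ∈ U, skewSMul ⇑σ δ u (Finsupp.single 0 (f j)) = 0}) ↔
      (∀ (m : ℕ →₀ M) (f : ℕ →₀ R), skewSMul ⇑σ δ m f = 0 → ∀ i j : ℕ,
        ∑ ℓ ∈ m.support.filter (fun ℓ => i ≤ ℓ), op (fw ⇑σ δ i ℓ (f j)) • m ℓ = 0) :=
  annihilator_closed_iff_general σ δ hδadd M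
end

section
/- Suppose M_R is reduced and (σ,δ)-compatible. If m(x) = Σ_{i=0}^p m_i x^i ∈ M[x;σ,δ] and f(x) = Σ_{j=0}^q a_j x^j ∈ R[x;σ,δ] satisfy m(x)f(x) = 0, then m_i a_j = 0 for all i, j. -/
open MulOpposite

/-!
Induct downwards on `n = i + j`. Once `m_i a_j = 0` is known for all `i + j > n`, compatibility
kills every term of the `x^n` coefficient of `m(x) f(x)` except the leading ones, leaving
`Σ_{i+j=n} m_i σ^i(a_j) = 0`. Right-multiplying this by `a_j` and inducting upwards on `i`,
all terms but `m_i σ^i(a_j) a_j` vanish (by compatibility for smaller indices and by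
semicommutativity for larger ones); then `m_i σ^i(a_j) σ^i(a_j) = 0` by compatibility, so
`m_i σ^i(a_j) = 0` since `M` is reduced, and `m_i a_j = 0` by compatibility again.
-/

open Finset

section Words

variable {R : Type*} [Ring R] (σ : R →+* R) {δ : R → R}

theorem fw_eq_zero_of_lt (hδ0 : δ 0 = 0) {i j : ℕ} (h : j < i) (a : R) : fw σ δ i j a = 0 := by
  induction j generalizing i with
  | zero => obtain ⟨i, rfl⟩ := Nat.exists_eq_add_of_lt h; rfl
  | succ j ih =>
    obtain ⟨i, rfl⟩ := Nat.exists_eq_add_of_lt h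
    simp only [fw, ih (by omega : j < j + 1 + i), ih (by omega : j < j + 1 + i + 1), map_zero,
      hδ0, add_zero]

theorem fw_self (hδ0 : δ 0 = 0) (j : ℕ) (a : R) : fw σ δ j j a = σ^[j] a := by
  induction j with
  | zero => rfl
  | succ j ih =>
    simp only [fw, ih, fw_eq_zero_of_lt σ hδ0 (Nat.lt_succ_self j), hδ0, add_zero,
      Function.iterate_succ_apply']

end Words

section Compatible

variable {R : Type*} [Ring R] {σ δ : R → R} {M : Type*} [AddCommGroup M] [Module Rᵐᵒᵖ M]

theorem SigmaCompatible.iterate_smul_eq_zero_iff (hσ : SigmaCompatible σ M) (m : M) (a : R)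
    (t : ℕ) : op (σ^[t] a) • m = 0 ↔ op a • m = 0 := by
  induction t with
  | zero => rfl
  | succ t ih => rw [Function.iterate_succ_apply', ← hσ, ih]

theorem fw_smul_eq_zero (hσ : SigmaCompatible σ M) (hδ : DeltaCompatible δ M) {m : M} {a : R}
    (h : op a • m = 0) (i j : ℕ) : op (fw σ δ i j a) • m = 0 := by
  induction j generalizing i with
  | zero =>
    cases i with
    | zero => exact h
    | succ i => exact (congrArg (· • m) op_zero).trans (zero_smul _ m)
  | succ j ih =>
    cases i with
    | zero => exact hδ m _ (ih 0)
    | succ i => rw [fw, op_add, add_smul, (hσ m _).mp (ih i), hδ m _ (ih (i + 1)), add_zero]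

theorem IsReducedModule.smul_smul_eq_zero (hred : IsReducedModule (R := R) M) {m : M} {a : R}
    (h : op a • m = 0) (r : R) : op a • op r • m = 0 :=
  hred m a h _ ⟨r * a, by rw [op_mul, mul_smul]⟩ ⟨op r • m, rfl⟩

theorem IsReducedModule.smul_eq_zero_of_smul_smul_self (hred : IsReducedModule (R := R) M)
    {m : M} {a : R} (h : op a • op a • m = 0) : op a • m = 0 :=
  hred (op a • m) a h _ ⟨1, one_smul _ _⟩ ⟨m, rfl⟩

theorem IsReducedModule.smul_eq_zero_of_smul_iterate_smul (hred : IsReducedModule (R := R) M)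
    (hσ : SigmaCompatible σ M) {m : M} {a : R} (t : ℕ) (h : op a • op (σ^[t] a) • m = 0) :
    op a • m = 0 := by
  rw [← hσ.iterate_smul_eq_zero_iff _ _ t] at h ⊢
  exact hred.smul_eq_zero_of_smul_smul_self h

theorem IsReducedModule.smul_eq_zero_of_sum_antidiagonal (hred : IsReducedModule (R := R) M)
    (hσ : SigmaCompatible σ M) {m : ℕ → M} {f : ℕ → R} {n : ℕ}
    (hsum : ∑ p ∈ antidiagonal n, op (σ^[p.1] (f p.2)) • m p.1 = 0)
    (hvan : ∀ i j, n < i + j → op (f j) • m i = 0) :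
    ∀ i j, i + j = n → op (f j) • m i = 0 := by
  intro i
  induction i using Nat.strong_induction_on with
  | _ i ih =>
    intro j hij
    have hterm : ∀ p ∈ antidiagonal n, p ≠ (i, j) →
        op (f j) • op (σ^[p.1] (f p.2)) • m p.1 = 0 := by
      rintro ⟨k, l⟩ hkl hne
      rw [HasAntidiagonal.mem_antidiagonal] at hkl
      rcases lt_trichotomy k i with hlt | rfl | hgt
      · rw [(hσ.iterate_smul_eq_zero_iff _ _ k).mpr (ih k hlt l (by omega)), smul_zero]
      · obtain rfl : l = j := by omega
        exact absurd rfl hne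
      · exact hred.smul_smul_eq_zero (hvan k j (by omega)) _
    have hlead : op (f j) • op (σ^[i] (f j)) • m i = 0 := by
      rw [← smul_zero (op (f j)), ← hsum, smul_sum,
        sum_eq_single_of_mem (i, j) (HasAntidiagonal.mem_antidiagonal.mpr hij) hterm]
    exact hred.smul_eq_zero_of_smul_iterate_smul hσ i hlead

end Compatible

section SkewPolynomial

variable {R : Type*} [Ring R] {M : Type*} [AddCommGroup M] [Module Rᵐᵒᵖ M]

theorem skewSMul_apply (σ δ : R → R) (m : ℕ →₀ M) (f : ℕ →₀ R) (n : ℕ) :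
    skewSMul σ δ m f n = ∑ j ∈ m.support, ∑ l ∈ f.support, ∑ i ∈ range (j + 1),
      if i + l = n then op (fw σ δ i j (f l)) • m j else 0 := by
  simp only [skewSMul, Finsupp.sum, Finsupp.finsetSum_apply, Finsupp.single_apply]

theorem sum_antidiagonal_eq_zero_of_skewSMul_eq_zero (σ : R →+* R) {δ : R → R}
    (hδ0 : δ 0 = 0) (hσ : SigmaCompatible σ M) (hδ : DeltaCompatible δ M)
    {m : ℕ →₀ M} {f : ℕ →₀ R} (hmf : skewSMul σ δ m f = 0) {n : ℕ}
    (hvan : ∀ i j, n < i + j → op (f j) • m i = 0) :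
    ∑ p ∈ antidiagonal n, op (σ^[p.1] (f p.2)) • m p.1 = 0 := by
  have hterm : ∀ j l i, i ≤ j →
      (if i + l = n then op (fw σ δ i j (f l)) • m j else 0) =
        if i = j then (if j + l = n then op (σ^[j] (f l)) • m j else 0) else 0 := by
    intro j l i hij
    rcases hij.eq_or_lt with rfl | hlt
    · simp only [if_true, fw_self σ hδ0]
    · rw [if_neg hlt.ne]
      split_ifs with h
      · exact fw_smul_eq_zero hσ hδ (hvan j l (by omega)) i j
      · rfl
  calc ∑ p ∈ antidiagonal n, op (σ^[p.1] (f p.2)) • m p.1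
      = ∑ p ∈ (m.support ×ˢ f.support).filter (fun p => p.1 + p.2 = n),
          op (σ^[p.1] (f p.2)) • m p.1 := by
        refine (sum_subset (fun p hp => ?_) fun p hpn hp => ?_).symm
        · exact HasAntidiagonal.mem_antidiagonal.mpr (mem_filter.mp hp).2
        · simp only [mem_filter, mem_product, Finsupp.mem_support_iff,
            HasAntidiagonal.mem_antidiagonal.mp hpn, and_true, not_and_or, not_not] at hp
          rcases hp with hm | hf
          · rw [hm, smul_zero]
          · rw [hf, Function.iterate_fixed (map_zero σ), op_zero, zero_smul]
    _ = ∑ j ∈ m.support, ∑ l ∈ f.support, ∑ i ∈ range (j + 1),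
          if i + l = n then op (fw σ δ i j (f l)) • m j else 0 := by
        rw [sum_filter, sum_product]
        refine sum_congr rfl fun j _ => sum_congr rfl fun l _ => ?_
        rw [sum_congr rfl fun i hi => hterm j l i (Nat.lt_succ_iff.mp (mem_range.mp hi)),
          sum_ite_eq', if_pos (mem_range.mpr j.lt_succ_self)]
    _ = 0 := by rw [← skewSMul_apply, hmf, Finsupp.zero_apply]

end SkewPolynomial

theorem reduced_compatible_coeffs_general {R : Type*} [Ring R] (σ : R →+* R) (δ : R → R)
    (hδadd : ∀ a b : R, δ (a + b) = δ a + δ b)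
    (M : Type*) [AddCommGroup M] [Module Rᵐᵒᵖ M]
    (hred : IsReducedModule (R := R) M)
    (hσ : SigmaCompatible ⇑σ M) (hδc : DeltaCompatible δ M) :
    ∀ (m : ℕ →₀ M) (f : ℕ →₀ R), skewSMul ⇑σ δ m f = 0 →
      ∀ i j : ℕ, op (f j) • m i = 0 := by
  have hδ0 : δ 0 = 0 := by simpa using hδadd 0 0
  intro m f hmf
  obtain ⟨N, hN⟩ := exists_nat_subset_range (m.support ∪ f.support)
  have hbound : ∀ k, N ≤ k → m k = 0 ∧ f k = 0 := fun k hk => by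
    simpa [Finsupp.notMem_support_iff] using fun h => (mem_range.mp (hN h)).not_ge hk
  suffices h : ∀ n i j, i + j = n → op (f j) • m i = 0 from fun i j => h _ i j rfl
  intro n
  induction n using Nat.strong_decreasing_induction with
  | base =>
    refine ⟨N + N, fun n hn i j hij => ?_⟩
    rcases le_or_gt N i with hi | hj
    · rw [(hbound i hi).1, smul_zero]
    · rw [(hbound j (by omega)).2, op_zero, zero_smul]
  | step n ih =>
    have hvan : ∀ i j, n < i + j → op (f j) • m i = 0 := fun i j h => ih _ h i j rfl
    exact hred.smul_eq_zero_of_sum_antidiagonal hσ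
      (sum_antidiagonal_eq_zero_of_skewSMul_eq_zero σ hδ0 hσ hδc hmf hvan) hvan

/-- If `M_R` is reduced and `(σ,δ)`-compatible, then `m(x) f(x) = 0` implies `m_i a_j = 0`
for all `i, j`. -/
theorem reduced_compatible_coeffs {R : Type*} [Ring R] (σ : R →+* R) (δ : R → R)
    (hδadd : ∀ a b : R, δ (a + b) = δ a + δ b)
    (hδmul : ∀ a b : R, δ (a * b) = σ a * δ b + δ a * b)
    (M : Type*) [AddCommGroup M] [Module Rᵐᵒᵖ M]
    (hred : IsReducedModule (R := R) M)
    (hσ : SigmaCompatible ⇑σ M) (hδc : DeltaCompatible δ M) :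
    ∀ (m : ℕ →₀ M) (f : ℕ →₀ R), skewSMul ⇑σ δ m f = 0 →
      ∀ i j : ℕ, op (f j) • m i = 0 :=
  reduced_compatible_coeffs_general σ δ hδadd M hred hσ hδc
end

section
/- Let M_R be an (σ,δ)-compatible module such that ma² = 0 implies ma = 0 for all m ∈ M, a ∈ R. Then: (1) mσ(a)a = 0 implies ma = 0 and mσ(a) = 0; (2) maσ(a) = 0 implies ma = 0 and mσ(a) = 0. -/
open MulOpposite

theorem SigmaCompatible.mul_eq_zero_iff {R : Type*} [Ring R] {σ : R → R} {M : Type*}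
    [AddCommGroup M] [Module Rᵐᵒᵖ M] (hσ : SigmaCompatible σ M) (m : M) (a b : R) :
    op (b * a) • m = 0 ↔ op (b * σ a) • m = 0 := by
  simpa only [op_mul, mul_smul] using hσ (op b • m) a

theorem compatible_sq_lemma_general {R : Type*} [Ring R] (σ : R →+* R)
    (M : Type*) [AddCommGroup M] [Module Rᵐᵒᵖ M]
    (hσ : SigmaCompatible ⇑σ M)
    (hsq : ∀ (m : M) (a : R), op (a * a) • m = 0 → op a • m = 0) :
    ∀ (m : M) (a : R),
      (op (σ a * a) • m = 0 → op a • m = 0 ∧ op (σ a) • m = 0) ∧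
        (op (a * σ a) • m = 0 → op a • m = 0 ∧ op (σ a) • m = 0) := by
  intro m a
  constructor
  · intro h
    have hσa : op (σ a) • m = 0 := hsq m (σ a) ((hσ.mul_eq_zero_iff m a (σ a)).mp h)
    exact ⟨(hσ m a).mpr hσa, hσa⟩
  · intro h
    have ha : op a • m = 0 := hsq m a ((hσ.mul_eq_zero_iff m a a).mpr h)
    exact ⟨ha, (hσ m a).mp ha⟩

/-- Let `M_R` be `(σ,δ)`-compatible with `m a² = 0 ⟹ m a = 0`. Then
`m σ(a) a = 0` implies `m a = m σ(a) = 0`, and `m a σ(a) = 0` implies `m a = m σ(a) = 0`. -/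
theorem compatible_sq_lemma {R : Type*} [Ring R] (σ : R →+* R) (δ : R → R)
    (hδadd : ∀ a b : R, δ (a + b) = δ a + δ b)
    (hδmul : ∀ a b : R, δ (a * b) = σ a * δ b + δ a * b)
    (M : Type*) [AddCommGroup M] [Module Rᵐᵒᵖ M]
    (hσ : SigmaCompatible ⇑σ M) (hδc : DeltaCompatible δ M)
    (hsq : ∀ (m : M) (a : R), op (a * a) • m = 0 → op a • m = 0) :
    ∀ (m : M) (a : R),
      (op (σ a * a) • m = 0 → op a • m = 0 ∧ op (σ a) • m = 0) ∧
        (op (a * σ a) • m = 0 → op a • m = 0 ∧ op (σ a) • m = 0) :=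
  compatible_sq_lemma_general σ M hσ hsq
end
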